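/- arXiv:2210.11040 — 2 statements merged into one kernel-verified Lean document; each statement's English description precedes it below -/
import Mathlib

section
/- Let q ≥ 1 be an integer, let n₁ be a positive divisor of q, and let n₂, h, m ∈ ℤ. For a residue x coprime to a modulus c, let x̄ denote its multiplicative inverse modulo c. Then Σ_{a mod q, gcd(a,q)=1} e(ā(m−h)/q) · S(ā, n₂; q/n₁) = Σ_{d | q} d · μ(q/d) · Σ_{α mod q/n₁, gcd(α, q/n₁)=1, n₁α ≡ h−m (mod d)} e(ᾱ n₂ n₁ / q), where on the left ā is the inverse of a modulo q, and in the right-hand inner sum ᾱ is the inverse of α modulo q/n₁ (so that e(ᾱ n₂ n₁/q) = e(ᾱ n₂ / (q/n₁))). -/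
open scoped Classical

/-- `e t = exp(2 π i t)`. -/
noncomputable def e (t : ℝ) : ℂ := Complex.exp (2 * Real.pi * Complex.I * t)

/-- The multiplicative inverse of `a` modulo `c`, as a natural number in `{0,…,c-1}`
(meaningful when `gcd(a,c) = 1`). -/
def minv (c a : ℕ) : ℕ := ((a : ZMod c)⁻¹).val

/-- The Kloosterman sum `S(x, y; c) = ∑_{α mod c, (α,c)=1} e((xα + yᾱ)/c)`. -/
noncomputable def kloos (x y : ℤ) (c : ℕ) : ℂ :=
  ∑ α ∈ (Finset.range c).filter (fun α => Nat.gcd α c = 1),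
    e (((x * α + y * (minv c α) : ℤ) : ℝ) / c)


/-!
After the substitution `a ↦ ā`, opening the Kloosterman sum and combining the exponentials
(using `q = n₁ · (q / n₁)`) turns the `a`-sum, for each `α`, into the Ramanujan sum
`c_q(k) = ∑_{(a,q)=1} e(ka/q)` at `k = n₁α - (h - m)`. Detecting `(a, q) = 1` by
`∑_{t ∣ (a,q)} μ(t)` and evaluating the complete geometric sums gives
`c_q(k) = ∑_{d ∣ q, d ∣ k} d μ(q/d)`; exchanging the `α`- and `d`-sums yields the right side.
-/

open Finset ArithmeticFunction
open scoped ArithmeticFunction.Moebius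

lemma e_add (s t : ℝ) : e (s + t) = e s * e t := by
  simp [e, mul_add, Complex.exp_add]

lemma e_intCast (k : ℤ) : e k = 1 := by
  rw [e, ← Complex.exp_int_mul_two_pi_mul_I k]
  push_cast
  ring_nf

lemma e_intCast_div (k : ℤ) (q : ℕ) :
    e (k / q) = Complex.exp (2 * Real.pi * Complex.I / q) ^ k := by
  rw [e, ← Complex.exp_int_mul]
  congr 1
  push_cast
  ring

lemma e_intCast_div_eq_one_iff (k : ℤ) {q : ℕ} (hq : q ≠ 0) :
    e (k / q) = 1 ↔ (q : ℤ) ∣ k := by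
  rw [e_intCast_div, (Complex.isPrimitiveRoot_exp q hq).zpow_eq_one_iff_dvd]

lemma e_div_mul_e_div {n c q : ℕ} (hnc : n * c = q) (hq : q ≠ 0) (x y : ℤ) :
    e (x / q) * e (y / c) = e ((x + n * y : ℤ) / q) := by
  subst hnc
  have hn : (n : ℝ) ≠ 0 := Nat.cast_ne_zero.mpr (left_ne_zero_of_mul hq)
  have hc : (c : ℝ) ≠ 0 := Nat.cast_ne_zero.mpr (right_ne_zero_of_mul hq)
  rw [← e_add]
  congr 1
  push_cast
  field_simp

lemma sum_range_e_mul_div (k : ℤ) {q : ℕ} (hq : q ≠ 0) :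
    ∑ a ∈ range q, e (k * a / q) = if (q : ℤ) ∣ k then (q : ℂ) else 0 := by
  have hpow (a : ℕ) : e (k * a / q) = e (k / q) ^ a := by
    rw [e_intCast_div, ← zpow_natCast, ← zpow_mul, ← e_intCast_div]
    push_cast
    ring_nf
  simp only [hpow]
  split_ifs with hk
  · simp [(e_intCast_div_eq_one_iff k hq).mpr hk]
  · have hne : e (k / q) ≠ 1 := mt (e_intCast_div_eq_one_iff k hq).mp hk
    have hq_pow : e (k / q) ^ q = 1 := by
      rw [← hpow, mul_div_cancel_right₀ _ (Nat.cast_ne_zero.mpr hq), e_intCast]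
    rw [geom_sum_eq hne, hq_pow, sub_self, zero_div]

lemma sum_divisors_moebius (n : ℕ) :
    ∑ d ∈ n.divisors, (μ d : ℂ) = if n = 1 then 1 else 0 := by
  have := congrArg (· n) (coe_moebius_mul_coe_zeta (R := ℂ))
  simpa only [coe_mul_zeta_apply, one_apply, intCoe_apply] using this

lemma ite_coprime_eq_sum_moebius {a q : ℕ} (hq : q ≠ 0) :
    (if a.gcd q = 1 then (1 : ℂ) else 0) = ∑ t ∈ q.divisors with t ∣ a, (μ t : ℂ) := by
  rw [← sum_divisors_moebius, ← Nat.divisors_filter_dvd_of_dvd hq (Nat.gcd_dvd_right a q)]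
  refine sum_congr (filter_congr fun t ht => ?_) fun _ _ => rfl
  rw [Nat.dvd_gcd_iff, and_iff_left (Nat.dvd_of_mem_divisors ht)]

lemma sum_range_filter_dvd {M : Type*} [AddCommMonoid M] (f : ℕ → M) {t q : ℕ} (ht : t ∣ q)
    (ht0 : t ≠ 0) :
    ∑ a ∈ range q with t ∣ a, f a = ∑ b ∈ range (q / t), f (t * b) := by
  have hmultiples :
      (range q).filter (t ∣ ·) = (range (q / t)).map ⟨(t * ·), mul_right_injective₀ ht0⟩ := by
    ext a
    simp only [mem_filter, mem_range, mem_map, Function.Embedding.coeFn_mk]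
    constructor
    · rintro ⟨ha, b, rfl⟩
      exact ⟨b, (Nat.lt_div_iff_mul_lt' ht _).mpr ha, rfl⟩
    · rintro ⟨b, hb, rfl⟩
      exact ⟨(Nat.lt_div_iff_mul_lt' ht _).mp hb, dvd_mul_right t b⟩
  rw [hmultiples, sum_map]
  rfl

lemma sum_coprime_e_mul_div (k : ℤ) {q : ℕ} (hq : q ≠ 0) :
    ∑ a ∈ range q with a.gcd q = 1, e (k * a / q)
      = ∑ d ∈ q.divisors, if (d : ℤ) ∣ k then (d : ℂ) * (μ (q / d) : ℂ) else 0 := by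
  have hmultiples {t : ℕ} (ht : t ∈ q.divisors) :
      ∑ a ∈ range q with t ∣ a, e (k * a / q)
        = if ((q / t : ℕ) : ℤ) ∣ k then ((q / t : ℕ) : ℂ) else 0 := by
    have htq := Nat.dvd_of_mem_divisors ht
    have ht0 := (Nat.pos_of_mem_divisors ht).ne'
    have hqt : q / t ≠ 0 := (Nat.div_ne_zero_iff_of_dvd htq).mpr ⟨hq, ht0⟩
    rw [sum_range_filter_dvd _ htq ht0, ← sum_range_e_mul_div k hqt]
    refine sum_congr rfl fun b _ => ?_
    rw [Nat.cast_div htq (Nat.cast_ne_zero.mpr ht0)]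
    push_cast
    field_simp
  calc ∑ a ∈ range q with a.gcd q = 1, e (k * a / q)
      = ∑ a ∈ range q, ∑ t ∈ q.divisors, if t ∣ a then (μ t : ℂ) * e (k * a / q) else 0 := by
        rw [sum_filter]
        refine sum_congr rfl fun a _ => ?_
        rw [← sum_filter, ← sum_mul, ← ite_coprime_eq_sum_moebius hq, ite_mul, one_mul,
          zero_mul]
    _ = ∑ t ∈ q.divisors,
          if ((q / t : ℕ) : ℤ) ∣ k then ((q / t : ℕ) : ℂ) * (μ (q / (q / t)) : ℂ) else 0 := by
        rw [sum_comm]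
        refine sum_congr rfl fun t ht => ?_
        rw [← sum_filter, ← mul_sum, hmultiples ht,
          Nat.div_div_self (Nat.dvd_of_mem_divisors ht) hq]
        split_ifs <;> ring
    _ = _ := Nat.sum_div_divisors q fun d => if (d : ℤ) ∣ k then (d : ℂ) * (μ (q / d) : ℂ) else 0

lemma minv_mem_coprimes {q a : ℕ} (ha : a ∈ {a ∈ range q | a.gcd q = 1}) :
    minv q a ∈ {a ∈ range q | a.gcd q = 1} := by
  rw [mem_filter, mem_range] at ha ⊢
  have : NeZero q := ⟨by omega⟩
  have hu : IsUnit (a : ZMod q) := (ZMod.isUnit_iff_coprime a q).mpr ha.2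
  refine ⟨ZMod.val_lt _, ?_⟩
  rw [minv, ← hu.unit_spec, ZMod.inv_coe_unit]
  exact ZMod.val_coe_unit_coprime _

lemma minv_minv {q a : ℕ} (ha : a ∈ {a ∈ range q | a.gcd q = 1}) :
    minv q (minv q a) = a := by
  rw [mem_filter, mem_range] at ha
  have : NeZero q := ⟨by omega⟩
  have hu : IsUnit (a : ZMod q) := (ZMod.isUnit_iff_coprime a q).mpr ha.2
  rw [minv, minv, ZMod.natCast_zmod_val, ← hu.unit_spec, ZMod.inv_coe_unit, ZMod.inv_coe_unit,
    inv_inv, hu.unit_spec, ZMod.val_cast_of_lt ha.1]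

lemma sum_coprimes_comp_minv {M : Type*} [AddCommMonoid M] (q : ℕ) (F : ℕ → M) :
    ∑ a ∈ range q with a.gcd q = 1, F (minv q a) = ∑ a ∈ range q with a.gcd q = 1, F a :=
  sum_nbij' (minv q) (minv q) (fun _ => minv_mem_coprimes) (fun _ => minv_mem_coprimes)
    (fun _ => minv_minv) (fun _ => minv_minv) fun _ _ => rfl

theorem stmt6_general (q n₁ : ℕ) (hdvd : n₁ ∣ q) (n₂ h m : ℤ) :
    ∑ a ∈ (Finset.range q).filter (fun a => Nat.gcd a q = 1),
        e ((((minv q a : ℤ) * (m - h) : ℤ) : ℝ) / q) * kloos (minv q a) n₂ (q / n₁)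
      = ∑ d ∈ q.divisors, (d : ℂ) * (ArithmeticFunction.moebius (q / d) : ℂ) *
          ∑ α ∈ ((Finset.range (q / n₁)).filter
              (fun α => Nat.gcd α (q / n₁) = 1 ∧ ((n₁ : ℤ) * α ≡ h - m [ZMOD (d : ℤ)]))),
            e ((((minv (q / n₁) α : ℤ) * n₂ * n₁ : ℤ) : ℝ) / q) := by
  rcases eq_or_ne q 0 with rfl | hq
  · simp
  set c := q / n₁
  have hcombine (a α : ℕ) :
      e (((a * (m - h) : ℤ) : ℝ) / q) * e (((a * α + n₂ * minv c α : ℤ) : ℝ) / c)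
        = e (((minv c α * n₂ * n₁ : ℤ) : ℝ) / q) * e ((n₁ * α - (h - m) : ℤ) * a / q) := by
    rw [e_div_mul_e_div (Nat.mul_div_cancel' hdvd) hq, ← e_add, ← add_div]
    congr 2
    push_cast
    ring
  rw [sum_coprimes_comp_minv q fun b => e ((((b : ℤ) * (m - h) : ℤ) : ℝ) / q) * kloos b n₂ c]
  calc _ = ∑ α ∈ range c with α.gcd c = 1, e (((minv c α * n₂ * n₁ : ℤ) : ℝ) / q) *
          ∑ a ∈ range q with a.gcd q = 1, e ((n₁ * α - (h - m) : ℤ) * a / q) := by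
        simp only [kloos, mul_sum]
        rw [sum_comm]
        exact sum_congr rfl fun α _ => sum_congr rfl fun a _ => hcombine a α
    _ = ∑ d ∈ q.divisors, ∑ α ∈ range c with α.gcd c = 1,
          if (n₁ : ℤ) * α ≡ h - m [ZMOD d] then
            (d : ℂ) * (μ (q / d) : ℂ) * e (((minv c α * n₂ * n₁ : ℤ) : ℝ) / q)
          else 0 := by
        rw [sum_comm]
        refine sum_congr rfl fun α _ => ?_
        rw [sum_coprime_e_mul_div _ hq, mul_sum]
        refine sum_congr rfl fun d _ => ?_
        simp only [Int.modEq_comm.trans Int.modEq_iff_dvd]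
        split_ifs <;> ring
    _ = _ := by
        simp only [mul_sum, ← sum_filter, filter_filter]

theorem stmt6 (q n₁ : ℕ) (hq : 0 < q) (hn₁ : 0 < n₁) (hdvd : n₁ ∣ q) (n₂ h m : ℤ) :
    ∑ a ∈ (Finset.range q).filter (fun a => Nat.gcd a q = 1),
        e ((((minv q a : ℤ) * (m - h) : ℤ) : ℝ) / q) * kloos (minv q a) n₂ (q / n₁)
      = ∑ d ∈ q.divisors, (d : ℂ) * (ArithmeticFunction.moebius (q / d) : ℂ) *
          ∑ α ∈ ((Finset.range (q / n₁)).filter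
              (fun α => Nat.gcd α (q / n₁) = 1 ∧ ((n₁ : ℤ) * α ≡ h - m [ZMOD (d : ℤ)]))),
            e ((((minv (q / n₁) α : ℤ) * n₂ * n₁ : ℤ) : ℝ) / q) :=
  stmt6_general q n₁ hdvd n₂ h m
end

section
/- Let R ≥ 1 be a real number and let a, b be nonzero integers. Then Σ_{1 ≤ q ≤ R} gcd(q, a)·gcd(q, b) ≤ R · τ(|a|) · τ(|b|) · gcd(a, b), where the sum is over integers q. -/
/-!
`gcd(q, a) · gcd(q, b)` is one term of the sum of `d e` over the pairs `d ∣ a`, `e ∣ b` that both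
divide `q`; bound it by that sum and swap the order of summation. A pair `(d, e)` is then counted
for the `⌊R⌋ / lcm(d, e)` multiples of `lcm(d, e)` up to `R`, contributing at most
`R · d e / lcm(d, e) = R · gcd(d, e) ≤ R · gcd(a, b)`.
-/

open Finset

namespace Nat

lemma gcd_mul_gcd_le_sum_divisors {A B : ℕ} (hA : A ≠ 0) (hB : B ≠ 0) (q : ℕ) :
    q.gcd A * q.gcd B ≤
      ∑ p ∈ A.divisors ×ˢ B.divisors, if p.1 ∣ q ∧ p.2 ∣ q then p.1 * p.2 else 0 := by
  have hmem : (q.gcd A, q.gcd B) ∈ A.divisors ×ˢ B.divisors := by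
    simp [Nat.gcd_dvd_right, hA, hB]
  calc q.gcd A * q.gcd B
      = if q.gcd A ∣ q ∧ q.gcd B ∣ q then q.gcd A * q.gcd B else 0 := by
        simp [Nat.gcd_dvd_left]
    _ ≤ _ := single_le_sum (f := fun p : ℕ × ℕ => if p.1 ∣ q ∧ p.2 ∣ q then p.1 * p.2 else 0)
        (fun _ _ => Nat.zero_le _) hmem

lemma card_filter_Icc_dvd_and_dvd_mul_le (N d e : ℕ) :
    #{q ∈ Icc 1 N | d ∣ q ∧ e ∣ q} * (d * e) ≤ N * d.gcd e := by
  simp_rw [← Nat.lcm_dvd_iff]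
  rw [show Icc 1 N = Ioc 0 N from Icc_add_one_left_eq_Ioc 0 N, Nat.Ioc_filter_dvd_card_eq_div,
    ← Nat.gcd_mul_lcm d e]
  calc N / d.lcm e * (d.gcd e * d.lcm e)
      = N / d.lcm e * d.lcm e * d.gcd e := by ring
    _ ≤ N * d.gcd e := Nat.mul_le_mul_right _ (Nat.div_mul_le_self N _)

lemma sum_Icc_gcd_mul_gcd_le {A B : ℕ} (hA : A ≠ 0) (hB : B ≠ 0) (N : ℕ) :
    ∑ q ∈ Icc 1 N, q.gcd A * q.gcd B ≤ N * #A.divisors * #B.divisors * A.gcd B := by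
  calc ∑ q ∈ Icc 1 N, q.gcd A * q.gcd B
      ≤ ∑ q ∈ Icc 1 N, ∑ p ∈ A.divisors ×ˢ B.divisors,
          if p.1 ∣ q ∧ p.2 ∣ q then p.1 * p.2 else 0 :=
        sum_le_sum fun q _ => gcd_mul_gcd_le_sum_divisors hA hB q
    _ = ∑ p ∈ A.divisors ×ˢ B.divisors, #{q ∈ Icc 1 N | p.1 ∣ q ∧ p.2 ∣ q} * (p.1 * p.2) := by
        rw [sum_comm]
        simp only [← sum_filter, sum_const, smul_eq_mul]
    _ ≤ ∑ p ∈ A.divisors ×ˢ B.divisors, N * A.gcd B := by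
        refine sum_le_sum fun p hp => ?_
        obtain ⟨hdA, heB⟩ := mem_product.mp hp
        have hgcd : p.1.gcd p.2 ≤ A.gcd B :=
          Nat.le_of_dvd (Nat.gcd_pos_of_pos_left B (Nat.pos_of_ne_zero hA))
            (gcd_dvd_gcd (Nat.dvd_of_mem_divisors hdA) (Nat.dvd_of_mem_divisors heB))
        exact (card_filter_Icc_dvd_and_dvd_mul_le N p.1 p.2).trans (Nat.mul_le_mul_left N hgcd)
    _ = N * #A.divisors * #B.divisors * A.gcd B := by
        rw [sum_const, card_product, smul_eq_mul]
        ring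

end Nat

theorem stmt14 (R : ℝ) (hR : 1 ≤ R) (a b : ℤ) (ha : a ≠ 0) (hb : b ≠ 0) :
    ((∑ q ∈ Finset.Icc 1 ⌊R⌋₊, Int.gcd (q : ℤ) a * Int.gcd (q : ℤ) b : ℕ) : ℝ)
      ≤ R * (a.natAbs.divisors.card) * (b.natAbs.divisors.card) * Int.gcd a b := by
  have hfloor : (⌊R⌋₊ : ℝ) ≤ R := Nat.floor_le (by linarith)
  have hsum := Nat.sum_Icc_gcd_mul_gcd_le (Int.natAbs_ne_zero.mpr ha)
    (Int.natAbs_ne_zero.mpr hb) ⌊R⌋₊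
  calc ((∑ q ∈ Finset.Icc 1 ⌊R⌋₊, Int.gcd (q : ℤ) a * Int.gcd (q : ℤ) b : ℕ) : ℝ)
      ≤ ⌊R⌋₊ * (a.natAbs.divisors.card) * (b.natAbs.divisors.card) * Int.gcd a b := by
        exact_mod_cast hsum
    _ ≤ R * (a.natAbs.divisors.card) * (b.natAbs.divisors.card) * Int.gcd a b := by
        gcongr
end
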